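/- Let g ∈ Equiv.Perm (Fin n) have disjoint cycle decomposition into t cycles of lengths ℓ 1, …, ℓ t, let G = ⟨g⟩ and d = orderOf g. Then the vertex-edge graph of P(G) is complete — i.e. for every pair of distinct elements u, v ∈ G the segment convexHull ℝ {M(u), M(v)} is an exposed face of P(G) — if and only if for every subset I ⊆ {1, …, t} one has d_I = d or d_{I^c} = d. -/

import Mathlib

/-
For `u ≠ v` in `⟨g⟩`, the linear functional `M ↦ ∑ x, (M x (u x) + M x (v x))` attains its
maximum over the permutation matrices exactly at those `σ` that agree pointwise with `u` or `v`.
For `σ = g ^ k`, `u = g ^ b`, `v = g ^ c` this means that on each cycle `k ≡ b` or `k ≡ c` modulo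
its length; collecting the cycles of the first kind into `I` gives `k ≡ b [MOD d_I]` and
`k ≡ c [MOD d_{Iᶜ}]`, so the lcm condition forces `σ ∈ {u, v}` and the segment is an exposed face.

Conversely, if `p = d_I` and `q = d_{Iᶜ}` are both proper divisors of `d`, then `g ^ p` and `g ^ q`
have disjoint supports, so `M(1) + M(g ^ (p + q)) = M(g ^ p) + M(g ^ q)`. Since `lcm p q = d`
forces `d ∤ p + q`, the segment `[M(1), M(g ^ (p + q))]` joins two distinct vertices, and its
midpoint lies in the open segment between the vertices `M(g ^ p)` and `M(g ^ q)` not on it, so the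
segment is not even an extreme subset.
-/

/-- The permutation polytope of a subgroup `G` of permutations of `Fin n`:
the convex hull of the permutation matrices of elements of `G`. -/
noncomputable def permPolytope (n : ℕ) (G : Subgroup (Equiv.Perm (Fin n))) :
    Set (Matrix (Fin n) (Fin n) ℝ) :=
  convexHull ℝ {M : Matrix (Fin n) (Fin n) ℝ | ∃ σ ∈ G, M = σ.permMatrix ℝ}

open Equiv Equiv.Perm Finset

section ExposedFaces

variable {E : Type*} [AddCommGroup E] [Module ℝ E]

theorem convexHull_inter_hyperplane_of_le {s : Set E} {l : E →ₗ[ℝ] ℝ} {c : ℝ}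
    (hs : ∀ x ∈ s, l x ≤ c) :
    convexHull ℝ s ∩ {x | l x = c} = convexHull ℝ {x ∈ s | l x = c} := by
  set t := {x ∈ s | l x = c}
  have ht : convexHull ℝ t ⊆ {x | l x = c} :=
    convexHull_min (fun x hx => hx.2) (convex_hyperplane l.isLinear c)
  refine subset_antisymm ?_ fun x hx => ⟨convexHull_mono (fun y hy => hy.1) hx, ht hx⟩
  -- `{l < c} ∪ conv t` is convex, since `l = c` on `conv t`; it contains `s`, hence `conv s`.
  have hK : Convex ℝ ({x | l x < c} ∪ convexHull ℝ t) := by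
    have hle : ∀ x ∈ {x | l x < c} ∪ convexHull ℝ t, l x ≤ c := by
      rintro x (hx | hx)
      exacts [le_of_lt hx, (ht hx).le]
    intro x hx y hy a b ha hb hab
    rcases ha.eq_or_lt with rfl | ha
    · rw [zero_add] at hab
      simpa [hab] using hy
    rcases hb.eq_or_lt with rfl | hb
    · rw [add_zero] at hab
      simpa [hab] using hx
    by_cases hxy : x ∈ convexHull ℝ t ∧ y ∈ convexHull ℝ t
    · exact Or.inr (convex_convexHull ℝ t hxy.1 hxy.2 ha.le hb.le hab)
    left
    have hlt : l x < c ∨ l y < c := by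
      rcases hx with hx | hx <;> rcases hy with hy | hy <;> tauto
    have hx := hle x hx
    have hy := hle y hy
    change l (a • x + b • y) < c
    rw [map_add, map_smul, map_smul, smul_eq_mul, smul_eq_mul, ← one_mul c, ← hab, add_mul]
    rcases hlt with h | h
    · exact add_lt_add_of_lt_of_le (mul_lt_mul_of_pos_left h ha)
        (mul_le_mul_of_nonneg_left hy hb.le)
    · exact add_lt_add_of_le_of_lt (mul_le_mul_of_nonneg_left hx ha.le)
        (mul_lt_mul_of_pos_left h hb)
  rintro x ⟨hx, hxc⟩
  have hsK : s ⊆ {x | l x < c} ∪ convexHull ℝ t := fun y hy =>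
    (hs y hy).lt_or_eq.imp id fun h => subset_convexHull ℝ t ⟨hy, h⟩
  exact (convexHull_min hsK hK hx).resolve_left (by simp [show l x = c from hxc])

variable [TopologicalSpace E]

theorem isExposed_convexHull_of_le {s : Set E} {l : StrongDual ℝ E} {c : ℝ}
    (hs : ∀ x ∈ s, l x ≤ c) :
    IsExposed ℝ (convexHull ℝ s) (convexHull ℝ {x ∈ s | l x = c}) := by
  intro hne
  obtain ⟨x₀, hx₀, hlx₀⟩ := convexHull_nonempty_iff.mp hne
  have hface := convexHull_inter_hyperplane_of_le (l := (l : E →ₗ[ℝ] ℝ)) hs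
  have hhull : ∀ x ∈ convexHull ℝ s, l x ≤ c := fun x hx =>
    convexHull_min hs (convex_halfSpace_le (l : E →ₗ[ℝ] ℝ).isLinear c) hx
  refine ⟨l, ?_⟩
  simp only [ContinuousLinearMap.coe_coe] at hface
  rw [← hface]
  ext x
  refine ⟨fun ⟨hx, hxc⟩ => ⟨hx, fun y hy => (hhull y hy).trans_eq hxc.symm⟩,
    fun ⟨hx, hmax⟩ => ⟨hx, ?_⟩⟩
  exact le_antisymm (hhull x hx) (hlx₀ ▸ hmax x₀ (subset_convexHull ℝ s hx₀))

end ExposedFaces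

namespace Equiv.Perm

variable {α R : Type*} [DecidableEq α]

theorem permMatrix_apply [Zero R] [One R] (σ : Perm α) (i j : α) :
    σ.permMatrix R i j = if σ i = j then 1 else 0 := by
  simp [PEquiv.toMatrix_apply]

theorem permMatrix_injective [MulZeroOneClass R] [Nontrivial R] :
    Function.Injective (fun σ : Perm α => σ.permMatrix R) := by
  intro σ τ h
  ext x
  simpa [permMatrix_apply, eq_comm] using congr_fun (congr_fun h x) (σ x)

theorem Disjoint.permMatrix_mul_add_one [AddCommMonoidWithOne R] {σ τ : Perm α}
    (h : σ.Disjoint τ) : (σ * τ).permMatrix R + 1 = σ.permMatrix R + τ.permMatrix R := by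
  ext x y
  simp only [Matrix.add_apply, Matrix.one_apply, permMatrix_apply]
  rcases h x with hσ | hτ
  · have hστ : (σ * τ) x = τ x := by
      rw [h.commute.eq, mul_apply, hσ]
    rw [hστ, hσ, add_comm]
  · rw [mul_apply, hτ]

theorem eq_or_eq_of_permMatrix_mem_segment {σ u v : Perm α}
    (h : σ.permMatrix ℝ ∈ segment ℝ (u.permMatrix ℝ) (v.permMatrix ℝ)) : σ = u ∨ σ = v := by
  refine or_iff_not_imp_left.mpr fun hσu => ?_
  obtain ⟨x, hx⟩ : ∃ x, u x ≠ σ x := by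
    by_contra! h'
    exact hσu (Equiv.ext fun x => (h' x).symm)
  obtain ⟨a, b, ha, hb, hab, hM⟩ := h
  have hentry := congr_fun (congr_fun hM x) (σ x)
  simp only [Matrix.add_apply, Matrix.smul_apply, permMatrix_apply, hx, if_true, if_false,
    smul_eq_mul, mul_zero, zero_add] at hentry
  split_ifs at hentry with hv
  · rw [mul_one] at hentry
    obtain rfl : a = 0 := by linarith
    rw [hentry, zero_smul, one_smul, zero_add] at hM
    exact (permMatrix_injective hM).symm
  · exact absurd hentry (by simp)

variable [Fintype α]

noncomputable def edgeFunctional (u v : Perm α) : Matrix α α ℝ →ₗ[ℝ] ℝ :=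
  ∑ x, (Matrix.entryLinearMap ℝ ℝ x (u x) + Matrix.entryLinearMap ℝ ℝ x (v x))

theorem edgeFunctional_permMatrix (u v σ : Perm α) :
    edgeFunctional u v (σ.permMatrix ℝ) =
      ∑ x, ((if σ x = u x then 1 else 0) + if σ x = v x then 1 else 0) := by
  simp [edgeFunctional]

omit [Fintype α] in
private theorem ite_add_ite_le (a b c : α) :
    ((if a = b then 1 else 0) + if a = c then 1 else 0 : ℝ) ≤ 1 + if b = c then 1 else 0 := by
  split_ifs <;> simp_all

omit [Fintype α] in
private theorem ite_add_ite_eq_iff (a b c : α) :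
    ((if a = b then 1 else 0) + (if a = c then 1 else 0) : ℝ) = 1 + (if b = c then 1 else 0) ↔
      a = b ∨ a = c := by
  split_ifs <;> norm_num <;> simp_all

theorem edgeFunctional_permMatrix_le (u v σ : Perm α) :
    edgeFunctional u v (σ.permMatrix ℝ) ≤ edgeFunctional u v (u.permMatrix ℝ) := by
  simp only [edgeFunctional_permMatrix, if_true]
  exact sum_le_sum fun x _ => ite_add_ite_le _ _ _

theorem edgeFunctional_permMatrix_eq_iff (u v σ : Perm α) :
    edgeFunctional u v (σ.permMatrix ℝ) = edgeFunctional u v (u.permMatrix ℝ) ↔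
      ∀ x, σ x = u x ∨ σ x = v x := by
  simp only [edgeFunctional_permMatrix, if_true]
  rw [sum_eq_sum_iff_of_le fun x _ => ite_add_ite_le _ _ _]
  simp only [mem_univ, true_implies, ite_add_ite_eq_iff]

end Equiv.Perm

theorem isExposed_permPolytope_segment {n : ℕ} {G : Subgroup (Perm (Fin n))} {u v : Perm (Fin n)}
    (hu : u ∈ G) (hv : v ∈ G)
    (h : ∀ σ ∈ G, (∀ x, σ x = u x ∨ σ x = v x) → σ = u ∨ σ = v) :
    IsExposed ℝ (permPolytope n G) (convexHull ℝ {u.permMatrix ℝ, v.permMatrix ℝ}) := by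
  set l := LinearMap.toContinuousLinearMap (edgeFunctional u v)
  have hface : {M ∈ {M | ∃ σ ∈ G, M = σ.permMatrix ℝ} | l M = l (u.permMatrix ℝ)} =
      {u.permMatrix ℝ, v.permMatrix ℝ} := by
    ext M
    simp only [l, LinearMap.coe_toContinuousLinearMap', Set.mem_insert_iff,
      Set.mem_singleton_iff, Set.mem_ofPred_eq]
    constructor
    · rintro ⟨⟨σ, hσ, rfl⟩, hσuv⟩
      rcases h σ hσ ((edgeFunctional_permMatrix_eq_iff u v σ).mp hσuv) with rfl | rfl <;> simp
    · rintro (rfl | rfl)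
      exacts [⟨⟨u, hu, rfl⟩, rfl⟩,
        ⟨⟨v, hv, rfl⟩, (edgeFunctional_permMatrix_eq_iff u v v).mpr fun _ => .inr rfl⟩]
  rw [permPolytope, ← hface]
  refine isExposed_convexHull_of_le ?_
  rintro _ ⟨σ, -, rfl⟩
  exact edgeFunctional_permMatrix_le u v σ

theorem eq_one_or_eq_one_of_isExtreme_permPolytope {n : ℕ} {G : Subgroup (Perm (Fin n))}
    {σ τ : Perm (Fin n)} (hσ : σ ∈ G) (hτ : τ ∈ G) (hστ : σ.Disjoint τ)
    (h : IsExtreme ℝ (permPolytope n G)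
      (convexHull ℝ {(1 : Perm (Fin n)).permMatrix ℝ, (σ * τ).permMatrix ℝ})) :
    σ = 1 ∨ τ = 1 := by
  set m : Matrix (Fin n) (Fin n) ℝ := (2⁻¹ : ℝ) • (σ * τ).permMatrix ℝ + (2⁻¹ : ℝ) • 1
  have hm_edge : m ∈ convexHull ℝ {(1 : Perm (Fin n)).permMatrix ℝ, (σ * τ).permMatrix ℝ} := by
    rw [convexHull_pair, segment_symm, Matrix.permMatrix_one]
    exact ⟨2⁻¹, 2⁻¹, by norm_num, by norm_num, by norm_num, rfl⟩
  have hm_open : m ∈ openSegment ℝ (σ.permMatrix ℝ) (τ.permMatrix ℝ) :=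
    ⟨2⁻¹, 2⁻¹, by norm_num, by norm_num, by norm_num, by
      rw [← smul_add, ← hστ.permMatrix_mul_add_one, smul_add]⟩
  have hmem : ∀ ρ ∈ G, ρ.permMatrix ℝ ∈ permPolytope n G := fun ρ hρ =>
    subset_convexHull ℝ _ ⟨ρ, hρ, rfl⟩
  have hσ_edge := h.left_mem_of_mem_openSegment (hmem σ hσ) (hmem τ hτ) hm_edge hm_open
  rw [convexHull_pair] at hσ_edge
  exact (eq_or_eq_of_permMatrix_mem_segment hσ_edge).imp_right fun h => left_eq_mul.mp h

theorem Nat.not_dvd_add_of_lcm_eq {p q d : ℕ} (h : Nat.lcm p q = d) (hq : q ≠ d) : ¬ d ∣ p + q := by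
  intro hd
  have hpq : p ∣ q := (Nat.dvd_add_right dvd_rfl).mp ((h ▸ Nat.dvd_lcm_left p q).trans hd)
  exact hq ((Nat.lcm_eq_right_iff_dvd.mpr hpq).symm.trans h)

theorem Int.natCast_finset_lcm_dvd_iff {ι : Type*} {s : Finset ι} {f : ι → ℕ} {a : ℤ} :
    ((s.lcm f : ℕ) : ℤ) ∣ a ↔ ∀ i ∈ s, (f i : ℤ) ∣ a := by
  simp only [Int.natCast_dvd, Finset.lcm_dvd_iff]

namespace Equiv.Perm

variable {α : Type*} [Fintype α] [DecidableEq α] {g : Perm α}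

theorem card_support_cycleOf_mem_cycleType {x : α} (hx : x ∈ g.support) :
    #(g.cycleOf x).support ∈ g.cycleType :=
  Multiset.mem_map_of_mem _ (cycleOf_mem_cycleFactorsFinset_iff.mpr hx)

theorem exists_card_support_cycleOf_eq {m : ℕ} (hm : m ∈ g.cycleType) :
    ∃ x ∈ g.support, #(g.cycleOf x).support = m := by
  obtain ⟨c, hc, rfl⟩ := Multiset.mem_map.mp hm
  obtain ⟨x, hx⟩ := (mem_cycleFactorsFinset_iff.mp hc).1.nonempty_support
  refine ⟨x, mem_cycleFactorsFinset_support_le hc hx, ?_⟩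
  rw [← cycle_is_cycleOf hx hc]
  rfl

theorem zpow_apply_eq_zpow_apply_iff {x : α} (hx : x ∈ g.support) {a b : ℤ} :
    (g ^ a) x = (g ^ b) x ↔ a ≡ b [ZMOD #(g.cycleOf x).support] :=
  (g.isCycleOn_support_cycleOf x).zpow_apply_eq_zpow_apply
    (mem_support_cycleOf_iff.mpr ⟨SameCycle.refl _ _, hx⟩)

variable {t : ℕ} {ℓ : Fin t → ℕ}

theorem finset_univ_lcm_eq_orderOf (hg : g.cycleType = Multiset.map ℓ univ.val) :
    univ.lcm ℓ = orderOf g := by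
  rw [← lcm_cycleType, hg, Finset.lcm_def]

theorem pow_finset_lcm_eq_one_iff (hg : g.cycleType = Multiset.map ℓ univ.val)
    (I : Finset (Fin t)) : g ^ I.lcm ℓ = 1 ↔ I.lcm ℓ = orderOf g := by
  refine ⟨fun h => Nat.dvd_antisymm ?_ (orderOf_dvd_of_pow_eq_one h),
    fun h => h ▸ pow_orderOf_eq_one g⟩
  exact finset_univ_lcm_eq_orderOf hg ▸ lcm_mono (subset_univ I)

theorem lcm_finset_lcm_finset_lcm_compl (hg : g.cycleType = Multiset.map ℓ univ.val)
    (I : Finset (Fin t)) : Nat.lcm (I.lcm ℓ) (Iᶜ.lcm ℓ) = orderOf g := by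
  rw [← finset_univ_lcm_eq_orderOf hg, ← union_compl I, lcm_union]
  rfl

theorem disjoint_pow_lcm_pow_lcm_compl (hg : g.cycleType = Multiset.map ℓ univ.val)
    (I : Finset (Fin t)) : (g ^ I.lcm ℓ).Disjoint (g ^ Iᶜ.lcm ℓ) := by
  intro x
  by_cases hx : x ∈ g.support
  · obtain ⟨i, -, hi⟩ := Multiset.mem_map.mp (hg ▸ card_support_cycleOf_mem_cycleType hx)
    have hcyc := g.isCycleOn_support_cycleOf x
    have hxc := mem_support_cycleOf_iff.mpr ⟨SameCycle.refl _ _, hx⟩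
    rw [hcyc.pow_apply_eq hxc, hcyc.pow_apply_eq hxc, ← hi]
    by_cases hiI : i ∈ I
    · exact .inl (dvd_lcm hiI)
    · exact .inr (dvd_lcm (mem_compl.mpr hiI))
  · exact .inl (pow_apply_eq_self_of_apply_eq_self (notMem_support.mp hx) _)

theorem zpow_eq_or_zpow_eq_of_forall_apply (hg : g.cycleType = Multiset.map ℓ univ.val)
    (hI : ∀ I : Finset (Fin t), I.lcm ℓ = orderOf g ∨ Iᶜ.lcm ℓ = orderOf g) {k b c : ℤ}
    (h : ∀ x, (g ^ k) x = (g ^ b) x ∨ (g ^ k) x = (g ^ c) x) : g ^ k = g ^ b ∨ g ^ k = g ^ c := by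
  have hcycle : ∀ i, k ≡ b [ZMOD ℓ i] ∨ k ≡ c [ZMOD ℓ i] := by
    intro i
    obtain ⟨x, hx, hlen⟩ :=
      exists_card_support_cycleOf_eq (hg ▸ Multiset.mem_map_of_mem ℓ (mem_univ i))
    rw [← hlen, ← zpow_apply_eq_zpow_apply_iff hx, ← zpow_apply_eq_zpow_apply_iff hx]
    exact h x
  set I := univ.filter fun i => k ≡ b [ZMOD ℓ i]
  have hb : k ≡ b [ZMOD (I.lcm ℓ : ℕ)] := by
    rw [Int.modEq_iff_dvd, Int.natCast_finset_lcm_dvd_iff]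
    intro i hi
    exact Int.modEq_iff_dvd.mp (mem_filter.mp hi).2
  have hc : k ≡ c [ZMOD (Iᶜ.lcm ℓ : ℕ)] := by
    rw [Int.modEq_iff_dvd, Int.natCast_finset_lcm_dvd_iff]
    intro i hi
    refine Int.modEq_iff_dvd.mp ((hcycle i).resolve_left fun hki => ?_)
    exact mem_compl.mp hi (mem_filter.mpr ⟨mem_univ i, hki⟩)
  rw [zpow_eq_zpow_iff_modEq, zpow_eq_zpow_iff_modEq]
  rcases hI I with hd | hd
  · exact .inl (hd ▸ hb)
  · exact .inr (hd ▸ hc)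

end Equiv.Perm

theorem complete_graph_iff_general
    (n t : ℕ) (ℓ : Fin t → ℕ)
    (g : Equiv.Perm (Fin n))
    (hg : g.cycleType = Multiset.map ℓ Finset.univ.val) :
    (∀ u v : Equiv.Perm (Fin n), u ∈ Subgroup.zpowers g → v ∈ Subgroup.zpowers g →
        u ≠ v →
        IsExposed ℝ (permPolytope n (Subgroup.zpowers g))
          (convexHull ℝ {u.permMatrix ℝ, v.permMatrix ℝ}))
      ↔ ∀ I : Finset (Fin t), I.lcm ℓ = orderOf g ∨ Iᶜ.lcm ℓ = orderOf g := by
  constructor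
  · intro hcomplete I
    by_contra! hI
    have hmem : ∀ s : Finset (Fin t), g ^ s.lcm ℓ ∈ Subgroup.zpowers g :=
      fun s => Subgroup.npow_mem_zpowers g _
    have hedge : 1 ≠ g ^ I.lcm ℓ * g ^ Iᶜ.lcm ℓ := fun h1 =>
      Nat.not_dvd_add_of_lcm_eq (lcm_finset_lcm_finset_lcm_compl hg I) hI.2
        (orderOf_dvd_of_pow_eq_one (by rw [pow_add, ← h1]))
    have hext := (hcomplete 1 _ (Subgroup.one_mem _)
      (Subgroup.mul_mem _ (hmem I) (hmem Iᶜ)) hedge).isExtreme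
    rcases eq_one_or_eq_one_of_isExtreme_permPolytope (hmem I) (hmem Iᶜ)
      (disjoint_pow_lcm_pow_lcm_compl hg I) hext with h1 | h1
    exacts [hI.1 ((pow_finset_lcm_eq_one_iff hg I).mp h1),
      hI.2 ((pow_finset_lcm_eq_one_iff hg Iᶜ).mp h1)]
  · rintro hI u v ⟨b, rfl⟩ ⟨c, rfl⟩ -
    refine isExposed_permPolytope_segment ⟨b, rfl⟩ ⟨c, rfl⟩ ?_
    rintro _ ⟨k, rfl⟩ hk
    exact zpow_eq_or_zpow_eq_of_forall_apply hg hI hk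

/-- The vertex–edge graph of `P(⟨g⟩)` is complete iff for every subset `I` of the set of
cycles of `g`, `d_I = d` or `d_{Iᶜ} = d`, where `d_I = lcm(ℓ i : i ∈ I)` and
`d = orderOf g`. -/
theorem complete_graph_iff
    (n t : ℕ) (ℓ : Fin t → ℕ) (hℓ : ∀ i, 2 ≤ ℓ i)
    (g : Equiv.Perm (Fin n))
    (hg : g.cycleType = Multiset.map ℓ Finset.univ.val) :
    (∀ u v : Equiv.Perm (Fin n), u ∈ Subgroup.zpowers g → v ∈ Subgroup.zpowers g →
        u ≠ v →
        IsExposed ℝ (permPolytope n (Subgroup.zpowers g))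
          (convexHull ℝ {u.permMatrix ℝ, v.permMatrix ℝ}))
      ↔ ∀ I : Finset (Fin t), I.lcm ℓ = orderOf g ∨ Iᶜ.lcm ℓ = orderOf g :=
  complete_graph_iff_general n t ℓ g hg
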